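/- arXiv:2008.09776 — 3 statements merged into one kernel-verified Lean document; each statement's English description precedes it below -/
import Mathlib

section
/- Let η_i = ∑_{i^(1),…,i^(m-1)=1}^n A(i,i^(1),…,i^(m-1)) ξ_{i^(1)} ⊕ ⋯ ⊕ ξ_{i^(m-1)} for i ∈ [n], where the ξ_i are anticommuting (Grassmann) generators in each tensor factor. Then for any r-element subset I = (i₁ < ⋯ < i_r) of [n], the product η_{i₁}⋯η_{i_r} equals ∑_{I^(1),…,I^(m-1) ∈ C([n],r)} det^[m] A_{I,I^(1),…,I^(m-1)} · ξ_{I^(1)} ⊕ ⋯ ⊕ ξ_{I^(m-1)}, where ξ_{I^(k)} = ξ_{i^(k)_1}⋯ξ_{i^(k)_r} and the sum ranges over r-element subsets of [n]. -/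
/-!
Multiplying out `η_{i₁} ⋯ η_{i_r}` gives a sum over arrays `H : [m-1] × [r] → [n]`, with
coefficient `∏_t A(i_t, H(·, t))` and, in the `k`-th tensor factor, the Grassmann monomial
`ξ_{H(k,1)} ⋯ ξ_{H(k,r)}`. This monomial vanishes unless the row `H(k, ·)` is injective, and then
it is `sgn σ_k · ξ_{J_k}`, where `J_k` is the set of entries of the row and `σ_k` the permutation
sorting them. Grouping the arrays by `(J_1, …, J_{m-1})` and summing over the permutations
`σ_k` yields the hyperdeterminant of the minor `A_{I,J_1,…,J_{m-1}}`.
-/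

open scoped Classical
open Finset Equiv

noncomputable section

variable {F : Type*} [Field F] [CharZero F]

/-- The hyperdeterminant `det^[m]` of an `m`-dimensional tensor of size `n`:
`∑_{σ₁,…,σ_{m-1}} sgn(σ₁⋯σ_{m-1}) ∏_i A(i, σ₁ i, …, σ_{m-1} i)`, encoded as a sum over
`m`-tuples of permutations whose `0`-th component is forced to be the identity. -/
def hyperdet (m n : ℕ) (A : (Fin m → Fin n) → F) : F :=
  ∑ σ : Fin m → Equiv.Perm (Fin n),
    if (∀ k : Fin m, k.1 = 0 → σ k = 1) then
      (∏ k, ((Equiv.Perm.sign (σ k) : ℤ) : F)) * ∏ i, A fun k => σ k i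
    else 0

/-- `blk l n j i` is the `i`-th entry of the `j`-th consecutive block of length `l` in `[l*n]`. -/
def blk (l n : ℕ) (j : Fin n) (i : Fin l) : Fin (l * n) :=
  ⟨j.1 * l + i.1, by
    have hi := i.2; have hj := j.2
    calc j.1 * l + i.1 < (j.1 + 1) * l := by rw [Nat.add_mul, Nat.one_mul]; omega
      _ ≤ n * l := Nat.mul_le_mul_right l hj
      _ = l * n := Nat.mul_comm n l⟩

/-- A permutation of `[l*n]` is block-increasing if it is increasing on each of the
`n` consecutive blocks of length `l`. -/
def BlockInc (l n : ℕ) (σ : Equiv.Perm (Fin (l * n))) : Prop :=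
  ∀ j : Fin n, StrictMono fun i : Fin l => σ (blk l n j i)

/-- The `j`-th block of `σ`, as a subset of `[l*n]`. -/
def blkSet (l n : ℕ) (σ : Equiv.Perm (Fin (l * n))) (j : Fin n) : Finset (Fin (l * n)) :=
  Finset.image (fun i => σ (blk l n j i)) Finset.univ

/-- The hyperpfaffian `Pf^[l,m]` of an `m`-dimensional `l`-block array of size `l*n`
(the `m` dimensions are indexed by an arbitrary finite type `ι`). -/
def hyperpf (l n : ℕ) {ι : Type*} [Fintype ι]
    (B : (ι → Finset (Fin (l * n))) → F) : F :=
  (n.factorial : F)⁻¹ *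
    ∑ σ : ι → Equiv.Perm (Fin (l * n)),
      if ∀ s, BlockInc l n (σ s) then
        (∏ s, ((Equiv.Perm.sign (σ s) : ℤ) : F)) *
          ∏ k : Fin n, B fun s => blkSet l n (σ s) k
      else 0

/-- The hyperhafnian `Hf^[l,m]` (same sum as the hyperpfaffian, without signs). -/
def hyperhf (l n : ℕ) {ι : Type*} [Fintype ι]
    (B : (ι → Finset (Fin (l * n))) → F) : F :=
  (n.factorial : F)⁻¹ *
    ∑ σ : ι → Equiv.Perm (Fin (l * n)),
      if ∀ s, BlockInc l n (σ s) then
        ∏ k : Fin n, B fun s => blkSet l n (σ s) k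
      else 0

/-- The Grassmann generator `ξ_i` in the exterior algebra on `Fin n → F`. -/
def xi (F : Type*) [Field F] (n : ℕ) (i : Fin n) : ExteriorAlgebra F (Fin n → F) :=
  ExteriorAlgebra.ι F (Pi.single i 1)

/-- `ξ_I`, the product of the generators `ξ_i`, `i ∈ I`, in increasing order. -/
def xiSet (F : Type*) [Field F] (n : ℕ) (I : Finset (Fin n)) :
    ExteriorAlgebra F (Fin n → F) :=
  ((I.sort (· ≤ ·)).map (xi F n)).prod

/-- `ξ = ξ₁ξ₂⋯ξ_n`. -/
def xiFull (F : Type*) [Field F] (n : ℕ) : ExteriorAlgebra F (Fin n → F) :=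
  ((List.finRange n).map (xi F n)).prod

/-- `η_i = ∑ A(i, i⁽¹⁾,…,i⁽ᵐ⁻¹⁾) ξ_{i⁽¹⁾} ⊕ ⋯ ⊕ ξ_{i⁽ᵐ⁻¹⁾}` in the `(m-1)`-fold tensor
product of exterior algebras (here `m = q+1`). -/
def eta {F : Type*} [Field F] {q n : ℕ} (A : (Fin (q + 1) → Fin n) → F) (i : Fin n) :
    PiTensorProduct F (fun _ : Fin q => ExteriorAlgebra F (Fin n → F)) :=
  ∑ f : Fin q → Fin n,
    A (Fin.cons i f) • PiTensorProduct.tprod F (fun k => xi F n (f k))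

theorem List.prod_ofFn_sum_smul {R A κ : Type*} [CommSemiring R] [Semiring A]
    [Algebra R A] [Fintype κ] {r : ℕ} (c : Fin r → κ → R) (v : Fin r → κ → A) :
    (List.ofFn fun t => ∑ j, c t j • v t j).prod
      = ∑ G : Fin r → κ, (∏ t, c t (G t)) • (List.ofFn fun t => v t (G t)).prod := by
  rw [← MultilinearMap.mkPiAlgebraFin_apply (R := R), MultilinearMap.map_sum]
  simp only [MultilinearMap.map_smul_univ, MultilinearMap.mkPiAlgebraFin_apply]

theorem PiTensorProduct.prod_ofFn_tprod {R ι : Type*} {A : ι → Type*} [CommSemiring R]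
    [∀ i, Semiring (A i)] [∀ i, Algebra R (A i)] {r : ℕ} (x : Fin r → ∀ i, A i) :
    (List.ofFn fun t => tprod R (x t)).prod = tprod R fun i => (List.ofFn fun t => x t i).prod := by
  calc (List.ofFn fun t => tprod R (x t)).prod = tprodMonoidHom R (List.ofFn x).prod := by
        rw [map_list_prod, List.map_ofFn]; rfl
    _ = _ := by
        rw [tprodMonoidHom_apply]
        congr 1
        funext i
        rw [Pi.list_prod_apply, List.map_ofFn]
        rfl

theorem Finset.sort_eq_ofFn_orderEmbOfFin {α : Type*} [LinearOrder α] (s : Finset α) {k : ℕ}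
    (h : s.card = k) : s.sort (· ≤ ·) = List.ofFn (s.orderEmbOfFin h) := by
  apply List.ext_getElem <;> simp [Finset.orderEmbOfFin_apply, h]

theorem Finset.exists_perm_orderEmbOfFin_comp_eq {α : Type*} [LinearOrder α] {r : ℕ}
    {s : Finset α} (h : s.card = r) {g : Fin r → α} (hg : univ.image g = s) :
    ∃ σ : Perm (Fin r), ∀ t, s.orderEmbOfFin h (σ t) = g t := by
  have hmem : ∀ t, g t ∈ s := fun t => hg ▸ mem_image_of_mem g (mem_univ t)
  have hinj : Function.Injective g := by
    rw [← Set.injOn_univ, ← coe_univ, ← card_image_iff, hg, h, card_univ, Fintype.card_fin]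
  let τ : Fin r → Fin r := fun t => (s.orderIsoOfFin h).symm ⟨g t, hmem t⟩
  have hτ : Function.Injective τ := fun a b hab =>
    hinj (congrArg Subtype.val ((s.orderIsoOfFin h).symm.injective hab))
  refine ⟨Equiv.ofBijective τ hτ.bijective_of_finite, fun t => ?_⟩
  simp [τ, ← coe_orderIsoOfFin_apply]

theorem sum_eq_sum_finset_sum_perm {ι α M : Type*} [Fintype ι] [DecidableEq ι] [LinearOrder α]
    [Fintype α] [AddCommMonoid M] {r : ℕ} (Φ : (ι → Fin r → α) → M)
    (hΦ : ∀ H k, ¬ Function.Injective (H k) → Φ H = 0) :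
    ∑ H, Φ H = ∑ J : ι → Finset α, if h : ∀ k, (J k).card = r then
      ∑ σ : ι → Perm (Fin r), Φ (fun k t => (J k).orderEmbOfFin (h k) (σ k t)) else 0 := by
  rw [← Finset.sum_fiberwise univ (fun H k => univ.image (H k)) Φ]
  refine Finset.sum_congr rfl fun J _ => ?_
  split_ifs with h
  · symm
    refine Finset.sum_bij (fun σ _ k t => (J k).orderEmbOfFin (h k) (σ k t)) ?_ ?_ ?_
      fun _ _ => rfl
    · intro σ _
      simp only [mem_filter, mem_univ, true_and]
      funext k
      change univ.image ((J k).orderEmbOfFin (h k) ∘ σ k) = J k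
      rw [← image_image, image_univ_equiv, image_orderEmbOfFin_univ]
    · intro σ _ τ _ hστ
      funext k
      exact Equiv.ext fun t =>
        (J k).orderEmbOfFin (h k) |>.injective (congrFun (congrFun hστ k) t)
    · intro H hH
      have hJ : ∀ k, univ.image (H k) = J k := congrFun (mem_filter.1 hH).2
      choose σ hσ using fun k => exists_perm_orderEmbOfFin_comp_eq (h k) (hJ k)
      exact ⟨σ, mem_univ _, funext fun k => funext (hσ k)⟩
  · push Not at h
    obtain ⟨k, hk⟩ := h
    refine Finset.sum_eq_zero fun H hH => hΦ H k fun hinj => hk ?_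
    rw [← congrFun (mem_filter.1 hH).2 k, card_image_of_injective _ hinj, card_univ,
      Fintype.card_fin]

theorem prod_ofFn_xi_eq_zero {K : Type*} [Field K] {n r : ℕ} {g : Fin r → Fin n}
    (hg : ¬ Function.Injective g) : (List.ofFn fun t => xi K n (g t)).prod = 0 := by
  exact (ExteriorAlgebra.ιMulti_apply (R := K) _).symm.trans
    (AlternatingMap.map_eq_zero_of_not_injective _ _ fun hinj => hg fun a b hab =>
      hinj (congrArg (fun i => (Pi.single i 1 : Fin n → K)) hab))

theorem prod_ofFn_xi_orderEmbOfFin_perm {K : Type*} [Field K] {n r : ℕ} (J : Finset (Fin n))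
    (h : J.card = r) (σ : Perm (Fin r)) :
    (List.ofFn fun t => xi K n (J.orderEmbOfFin h (σ t))).prod
      = ((Perm.sign σ : ℤ) : K) • xiSet K n J := by
  rw [xiSet, J.sort_eq_ofFn_orderEmbOfFin h, List.map_ofFn]
  simp only [xi, Function.comp_def, ← ExteriorAlgebra.ιMulti_apply]
  rw [← Function.comp_def (fun t => (Pi.single (J.orderEmbOfFin h t) 1 : Fin n → K)) σ,
    AlternatingMap.map_perm, Units.smul_def, Int.cast_smul_eq_zsmul]

theorem hyperdet_succ_eq_sum {K : Type*} [Field K] {q r : ℕ} (B : (Fin (q + 1) → Fin r) → K) :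
    hyperdet (q + 1) r B = ∑ σ : Fin q → Perm (Fin r),
      (∏ k, ((Perm.sign (σ k) : ℤ) : K)) * ∏ i, B (Fin.cons i fun k => σ k i) := by
  rw [hyperdet, ← (Fin.consEquiv fun _ => Perm (Fin r)).sum_comp, Fintype.sum_prod_type]
  have hcons : ∀ (σ : Fin q → Perm (Fin r)) (i : Fin r),
      (fun k => (Fin.cons (1 : Perm (Fin r)) σ : Fin (q + 1) → Perm (Fin r)) k i)
        = Fin.cons i fun k => σ k i :=
    fun σ i => funext fun k => Fin.cases rfl (fun _ => rfl) k
  simp [Fin.prod_univ_succ, hcons]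

theorem eta_prod_minor_expansion_general (q n r : ℕ)
    (A : (Fin (q + 1) → Fin n) → F) (I : Finset (Fin n)) (hI : I.card = r) :
    ((I.sort (· ≤ ·)).map (eta A)).prod
    = ∑ J : Fin q → Finset (Fin n),
        if h : ∀ k, (J k).card = r then
          hyperdet (q + 1) r (fun a =>
              A (Fin.cons (I.orderEmbOfFin hI (a 0))
                (fun k => (J k).orderEmbOfFin (h k) (a k.succ)))) •
            PiTensorProduct.tprod F (fun k => xiSet F n (J k))
        else 0 := by
  have expand : ((I.sort (· ≤ ·)).map (eta A)).prod = ∑ H : Fin q → Fin r → Fin n,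
      (∏ t, A (Fin.cons (I.orderEmbOfFin hI t) fun k => H k t)) •
        PiTensorProduct.tprod F (fun k => (List.ofFn fun t => xi F n (H k t)).prod) := by
    rw [I.sort_eq_ofFn_orderEmbOfFin hI, List.map_ofFn]
    simp only [Function.comp_def, eta, List.prod_ofFn_sum_smul, PiTensorProduct.prod_ofFn_tprod]
    exact ((Equiv.piComm _).sum_comp _).symm
  rw [expand, sum_eq_sum_finset_sum_perm _ fun H k hk => by
    rw [MultilinearMap.map_coord_zero _ k (prod_ofFn_xi_eq_zero hk), smul_zero]]
  refine Finset.sum_congr rfl fun J _ => ?_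
  split_ifs with h
  · simp only [prod_ofFn_xi_orderEmbOfFin_perm, MultilinearMap.map_smul_univ, smul_smul,
      hyperdet_succ_eq_sum, Finset.sum_smul]
    refine Finset.sum_congr rfl fun σ _ => ?_
    simp only [Fin.cons_zero, Fin.cons_succ, mul_comm]
  · rfl

/-- Proposition 1 (minor expansion of products of the `η_i`). -/
theorem eta_prod_minor_expansion (q n r : ℕ) (hm : Even (q + 1)) (hn : 0 < n)
    (A : (Fin (q + 1) → Fin n) → F) (I : Finset (Fin n)) (hI : I.card = r) :
    ((I.sort (· ≤ ·)).map (eta A)).prod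
    = ∑ J : Fin q → Finset (Fin n),
        if h : ∀ k, (J k).card = r then
          hyperdet (q + 1) r (fun a =>
              A (Fin.cons (I.orderEmbOfFin hI (a 0))
                (fun k => (J k).orderEmbOfFin (h k) (a k.succ)))) •
            PiTensorProduct.tprod F (fun k => xiSet F n (J k))
        else 0 :=
  eta_prod_minor_expansion_general q n r A I hI
end
end

section
/- (Laplace expansion of hyperdeterminant) For an even positive integer m, an m-dimensional tensor A of size n, and any r-element subset I of [n], det^[m] A = ∑_{I^(1),…,I^(m-1) ∈ C([n],r)} a_{I,I^(1),…,I^(m-1)} · ã_{I,I^(1),…,I^(m-1)}, where a denotes the minor and ã the cofactor. -/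
open scoped Classical
open Finset Equiv

noncomputable section

variable {F : Type*} [Field F] [CharZero F]

/-!
Sort the permutation tuples `σ` in the sum defining `det^[m] A` by the sets `J k = σ k '' I`.
Listing `I`, `Iᶜ`, `J k`, `(J k)ᶜ` in increasing order, a permutation with `σ '' I = J` is the
same as a pair of permutations of `Fin r` and `Fin (n - r)`, and its sign is `(-1)^(ΣI + ΣJ)`
times theirs. That sign is found by moving the elements of a set down, one adjacent
transposition at a time, until the set is `{0, …, r-1}`: each move lowers the element sum by
one. As `m` is even, the factors `(-1)^(ΣI)` cancel over the `m` coordinates, as does the shift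
from `0`-based to `1`-based indices in the exponent; and the normalisation `σ 0 = 1`
(where `J 0 = I`) splits into the same normalisation for both blocks.
-/

theorem Equiv.strictMonoOn_swap {α : Type*} [LinearOrder α] [DecidableEq α] {a b : α}
    (hab : a ⋖ b) {u : Set α} (hu : ¬(a ∈ u ∧ b ∈ u)) : StrictMonoOn (swap a b) u := by
  intro x hx y hy hxy
  have hcov : ∀ z, a < z → ¬z < b := fun _ h => hab.2 h
  simp only [swap_apply_def]
  split_ifs <;> grind [hab.lt]

namespace Finset

variable {n r : ℕ}

theorem card_compl_eq_sub {s : Finset (Fin n)} (hs : s.card = r) : sᶜ.card = n - r := by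
  rw [card_compl, hs, Fintype.card_fin]

theorem orderEmbOfFin_image {α β : Type*} [LinearOrder α] [LinearOrder β] {f : α → β}
    {s : Finset α} (hf : StrictMonoOn f s) {k : ℕ} (hs : s.card = k)
    (hfs : (s.image f).card = k) (i : Fin k) :
    (s.image f).orderEmbOfFin hfs i = f (s.orderEmbOfFin hs i) := by
  refine (congrFun (orderEmbOfFin_unique hfs (fun j => mem_image_of_mem f
    (orderEmbOfFin_mem s hs j)) fun i j hij => ?_) i).symm
  exact hf (orderEmbOfFin_mem s hs i) (orderEmbOfFin_mem s hs j)
    ((orderEmbOfFin s hs).strictMono hij)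

def finSumComplEquiv (s : Finset (Fin n)) (hs : s.card = r) : Fin r ⊕ Fin (n - r) ≃ Fin n :=
  ((s.orderIsoOfFin hs).toEquiv.sumCongr
      ((sᶜ.orderIsoOfFin (card_compl_eq_sub hs)).toEquiv.trans
        (subtypeEquivRight fun _ => mem_compl))).trans
    (Equiv.sumCompl (· ∈ s))

@[simp] theorem finSumComplEquiv_inl (s : Finset (Fin n)) (hs : s.card = r) (i : Fin r) :
    s.finSumComplEquiv hs (.inl i) = s.orderEmbOfFin hs i := rfl

@[simp] theorem finSumComplEquiv_inr (s : Finset (Fin n)) (hs : s.card = r) (j : Fin (n - r)) :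
    s.finSumComplEquiv hs (.inr j) = sᶜ.orderEmbOfFin (card_compl_eq_sub hs) j := rfl

theorem finSumComplEquiv_image {s t : Finset (Fin n)} (σ : Perm (Fin n))
    (hσs : StrictMonoOn σ s) (hσsc : StrictMonoOn σ (sᶜ : Finset (Fin n)))
    (hst : s.image σ = t) (hs : s.card = r) (ht : t.card = r) :
    t.finSumComplEquiv ht = (s.finSumComplEquiv hs).trans σ := by
  subst hst
  have hc : (s.image σ)ᶜ = sᶜ.image σ := by
    ext x
    obtain ⟨y, rfl⟩ := σ.surjective x
    simp [σ.injective.eq_iff]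
  ext (i | j)
  · simp [orderEmbOfFin_image hσs hs ht]
  · rw [finSumComplEquiv_inr, trans_apply, finSumComplEquiv_inr,
      ← orderEmbOfFin_image hσsc (card_compl_eq_sub hs) (hc ▸ card_compl_eq_sub ht)]
    simp only [hc]

def initialFin (hrn : r ≤ n) : Finset (Fin n) :=
  (range r).attachFin fun _ hk => (mem_range.1 hk).trans_le hrn

@[simp] theorem mem_initialFin (hrn : r ≤ n) {x : Fin n} : x ∈ initialFin hrn ↔ x.1 < r := by
  simp [initialFin]

@[simp] theorem card_initialFin (hrn : r ≤ n) : (initialFin hrn).card = r := by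
  simp [initialFin]

theorem exists_covBy_notMem_mem {s : Finset (Fin n)} (hrn : r ≤ n) (hs : s.card = r)
    (hsr : s ≠ initialFin hrn) : ∃ a ∉ s, ∃ b ∈ s, a ⋖ b := by
  by_contra! hgap
  have hdown : ∀ d, ∀ b ∈ s, ∀ c : Fin n, c.1 + d = b.1 → c ∈ s := by
    intro d
    induction d with
    | zero => intro b hb c hc; rwa [show c = b from Fin.ext hc]
    | succ d ih =>
      intro b hb c hc
      by_contra hcs
      exact hgap c hcs ⟨c.1 + 1, by omega⟩ (ih b hb _ (by simp; omega)) (by simp)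
  refine hsr (eq_of_subset_of_card_le (fun b hb => (mem_initialFin _).2 ?_) (by simp [hs]))
  by_contra! hrb
  have hIic : Iic b ⊆ s := fun c hc =>
    hdown (b.1 - c.1) b hb c (by have := mem_Iic.1 hc; rw [Fin.le_def] at this; omega)
  have := card_le_card hIic
  rw [Fin.card_Iic] at this
  omega

theorem sum_val_image_swap {s : Finset (Fin n)} {a b : Fin n} (hab : a ⋖ b) (has : a ∉ s)
    (hbs : b ∈ s) : ∑ i ∈ s.image (swap a b), i.1 + 1 = ∑ i ∈ s, i.1 := by
  rw [sum_image fun x _ y _ h => (swap a b).injective h, ← add_sum_erase s _ hbs,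
    ← add_sum_erase s _ hbs, swap_apply_right]
  have hfix : ∀ x ∈ s.erase b, (swap a b x).1 = x.1 := fun x hx => by
    rw [swap_apply_of_ne_of_ne (ne_of_mem_of_not_mem (mem_of_mem_erase hx) has)
      (ne_of_mem_erase hx)]
  rw [sum_congr rfl hfix]
  have hab' : a.1 + 1 = b.1 := by simpa using hab
  linarith

theorem sign_initialFin_symm_trans_finSumComplEquiv (hrn : r ≤ n) (s : Finset (Fin n))
    (hs : s.card = r) :
    Perm.sign (((initialFin hrn).finSumComplEquiv (card_initialFin hrn)).symm.trans
      (s.finSumComplEquiv hs)) = (-1) ^ (∑ i ∈ s, i.1 + ∑ i ∈ initialFin hrn, i.1) := by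
  induction hN : ∑ i ∈ s, i.1 using Nat.strong_induction_on generalizing s with
  | _ N ih =>
  by_cases hsr : s = initialFin hrn
  · subst hsr
    rw [symm_trans_self, Perm.sign_refl, ← hN, Even.neg_one_pow ⟨_, rfl⟩]
  obtain ⟨a, has, b, hbs, hab⟩ := exists_covBy_notMem_mem hrn hs hsr
  set s' := s.image (swap a b)
  have hs' : s'.card = r := by rw [card_image_of_injective _ (swap a b).injective, hs]
  have hback : s'.image (swap a b) = s := by
    ext x
    simp [s']
  have he : s.finSumComplEquiv hs = (s'.finSumComplEquiv hs').trans (swap a b) := by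
    refine finSumComplEquiv_image _ (strictMonoOn_swap hab ?_) (strictMonoOn_swap hab ?_)
      hback hs' hs
    · simp [s', has]
    · simp [s', hbs]
  have hsum : ∑ i ∈ s', i.1 + 1 = N := hN ▸ sum_val_image_swap hab has hbs
  rw [he, ← trans_assoc, ← Perm.mul_def, Perm.sign_mul, Perm.sign_swap hab.ne,
    ih _ (by omega) s' hs' rfl, ← hsum, add_right_comm, pow_succ']

theorem sign_finSumComplEquiv_symm_trans {s t : Finset (Fin n)} (hs : s.card = r)
    (ht : t.card = r) :
    Perm.sign ((s.finSumComplEquiv hs).symm.trans (t.finSumComplEquiv ht)) =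
      (-1) ^ (∑ i ∈ s, i.1 + ∑ i ∈ t, i.1) := by
  have hrn : r ≤ n := hs ▸ (card_le_univ s).trans_eq (Fintype.card_fin n)
  set E := (initialFin hrn).finSumComplEquiv (card_initialFin hrn)
  have hsplit : (s.finSumComplEquiv hs).symm.trans (t.finSumComplEquiv ht) =
      E.symm.trans (t.finSumComplEquiv ht) * (E.symm.trans (s.finSumComplEquiv hs))⁻¹ := by
    ext x
    simp [Perm.mul_apply, Perm.inv_def]
  rw [hsplit, Perm.sign_mul, map_inv, sign_initialFin_symm_trans_finSumComplEquiv,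
    sign_initialFin_symm_trans_finSumComplEquiv, Int.units_inv_eq_self, ← pow_add,
    show ∀ a b c : ℕ, b + c + (a + c) = a + b + 2 * c from fun _ _ _ => by ring,
    pow_add, pow_mul, neg_one_sq, one_pow, mul_one]

section blockPerm

variable {s t : Finset (Fin n)} (hs : s.card = r) (ht : t.card = r)

def blockPerm (τ : Perm (Fin r)) (ρ : Perm (Fin (n - r))) : Perm (Fin n) :=
  (s.finSumComplEquiv hs).symm.trans ((sumCongr τ ρ).trans (t.finSumComplEquiv ht))

theorem blockPerm_apply_finSumComplEquiv (τ : Perm (Fin r)) (ρ : Perm (Fin (n - r)))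
    (x : Fin r ⊕ Fin (n - r)) :
    blockPerm hs ht τ ρ (s.finSumComplEquiv hs x) = t.finSumComplEquiv ht (Sum.map τ ρ x) := by
  simp [blockPerm]

theorem blockPerm_inj {τ τ' : Perm (Fin r)} {ρ ρ' : Perm (Fin (n - r))} :
    blockPerm hs ht τ ρ = blockPerm hs ht τ' ρ' ↔ τ = τ' ∧ ρ = ρ' := by
  refine ⟨fun h => ?_, fun h => h.1 ▸ h.2 ▸ rfl⟩
  have hsum : sumCongr τ ρ = sumCongr τ' ρ' := by
    ext x : 1
    simpa [blockPerm_apply_finSumComplEquiv] using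
      DFunLike.congr_fun h (s.finSumComplEquiv hs x)
  exact Prod.ext_iff.1 (@Perm.sumCongrHom_injective _ _ (τ, ρ) (τ', ρ') hsum)

theorem blockPerm_eq_one_iff (hst : s = t) {τ : Perm (Fin r)} {ρ : Perm (Fin (n - r))} :
    blockPerm hs ht τ ρ = 1 ↔ τ = 1 ∧ ρ = 1 := by
  subst hst
  rw [← blockPerm_inj hs ht]
  simp [blockPerm, Perm.one_def]

theorem image_blockPerm (τ : Perm (Fin r)) (ρ : Perm (Fin (n - r))) :
    s.image (blockPerm hs ht τ ρ) = t := by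
  refine eq_of_subset_of_card_le (fun y hy => ?_) ?_
  · obtain ⟨x, hx, rfl⟩ := mem_image.1 hy
    obtain ⟨i, rfl⟩ : x ∈ Set.range (s.orderEmbOfFin hs) := by rwa [range_orderEmbOfFin]
    rw [← finSumComplEquiv_inl, blockPerm_apply_finSumComplEquiv]
    exact orderEmbOfFin_mem t ht (τ i)
  · rw [card_image_of_injective _ (Equiv.injective _), hs, ht]

theorem exists_blockPerm_of_image_eq {σ : Perm (Fin n)} (hσ : s.image σ = t) :
    ∃ τ ρ, blockPerm hs ht τ ρ = σ := by
  set f := (s.finSumComplEquiv hs).trans (σ.trans (t.finSumComplEquiv ht).symm)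
  have hf : Set.MapsTo f (Set.range Sum.inl) (Set.range Sum.inl) := by
    rintro _ ⟨i, rfl⟩
    obtain ⟨j, hj⟩ : σ (s.orderEmbOfFin hs i) ∈ Set.range (t.orderEmbOfFin ht) := by
      rw [range_orderEmbOfFin, ← hσ]
      exact mem_image_of_mem σ (orderEmbOfFin_mem s hs i)
    refine ⟨j, ?_⟩
    rw [trans_apply, trans_apply, finSumComplEquiv_inl, ← hj, ← finSumComplEquiv_inl,
      symm_apply_apply]
  obtain ⟨⟨τ, ρ⟩, hτρ⟩ := Perm.mem_sumCongrHom_range_of_perm_mapsTo_inl hf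
  refine ⟨τ, ρ, ?_⟩
  rw [Perm.sumCongrHom_apply] at hτρ
  ext x
  simp [blockPerm, hτρ, f]

theorem sign_blockPerm (τ : Perm (Fin r)) (ρ : Perm (Fin (n - r))) :
    Perm.sign (blockPerm hs ht τ ρ) =
      (-1) ^ (∑ i ∈ s, i.1 + ∑ i ∈ t, i.1) * Perm.sign τ * Perm.sign ρ := by
  have hsplit : blockPerm hs ht τ ρ = (s.finSumComplEquiv hs).symm.trans
      (t.finSumComplEquiv ht) * (s.finSumComplEquiv hs).permCongr (sumCongr τ ρ) := by
    ext x
    simp [blockPerm, Perm.mul_apply, permCongr_apply]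
  rw [hsplit, Perm.sign_mul, sign_finSumComplEquiv_symm_trans, Perm.sign_permCongr,
    Perm.sign_sumCongr, mul_assoc]

end blockPerm

end Finset

section Fiber

variable {ι : Type*} {n r : ℕ} {I : Finset (Fin n)} {J : ι → Finset (Fin n)}

theorem sum_filter_image_eq_sum_blockPerm [Fintype ι] [DecidableEq ι] {M : Type*}
    [AddCommMonoid M] (hI : I.card = r) (hJ : ∀ k, (J k).card = r)
    (f : (ι → Perm (Fin n)) → M) :
    ∑ σ with (fun k => I.image (σ k)) = J, f σ =
      ∑ p : (ι → Perm (Fin r)) × (ι → Perm (Fin (n - r))),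
        f fun k => blockPerm hI (hJ k) (p.1 k) (p.2 k) := by
  symm
  refine sum_nbij (fun p k => blockPerm hI (hJ k) (p.1 k) (p.2 k)) ?_ ?_ ?_ fun _ _ => rfl
  · intro p _
    simp [image_blockPerm]
  · intro p _ q _ hpq
    have h := fun k => (blockPerm_inj hI (hJ k)).1 (congrFun hpq k)
    exact Prod.ext (funext fun k => (h k).1) (funext fun k => (h k).2)
  · intro σ hσ
    have hσJ : ∀ k, I.image (σ k) = J k := congrFun (mem_filter.1 hσ).2
    choose τ ρ h using fun k => exists_blockPerm_of_image_eq hI (hJ k) (hσJ k)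
    exact ⟨(τ, ρ), mem_coe.2 (mem_univ _), funext h⟩

theorem prod_sign_blockPerm [Fintype ι] {R : Type*} [CommRing R] (hι : Even (Fintype.card ι))
    (hI : I.card = r) (hJ : ∀ k, (J k).card = r) (τ : ι → Perm (Fin r))
    (ρ : ι → Perm (Fin (n - r))) :
    ∏ k, ((Perm.sign (blockPerm hI (hJ k) (τ k) (ρ k)) : ℤ) : R) =
      (-1) ^ (∑ k, ∑ i ∈ J k, (i.1 + 1)) *
        ((∏ k, ((Perm.sign (τ k) : ℤ) : R)) * ∏ k, ((Perm.sign (ρ k) : ℤ) : R)) := by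
  have hpar : ∀ x, (-1 : R) ^ (Fintype.card ι * x) = 1 := fun x => (hι.mul_right x).neg_one_pow
  simp only [sign_blockPerm, Units.val_mul, Units.val_pow_eq_pow_val, Units.val_neg,
    Units.val_one, Int.cast_mul, Int.cast_pow, Int.cast_neg, Int.cast_one, prod_mul_distrib,
    prod_pow_eq_pow_sum, sum_add_distrib, sum_const, card_univ, smul_eq_mul, hJ, pow_add,
    hpar, one_mul, mul_one, mul_assoc]

theorem prod_blockPerm_apply {R : Type*} [CommMonoid R] (hI : I.card = r)
    (hJ : ∀ k, (J k).card = r) (A : (ι → Fin n) → R) (τ : ι → Perm (Fin r))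
    (ρ : ι → Perm (Fin (n - r))) :
    ∏ i, A (fun k => blockPerm hI (hJ k) (τ k) (ρ k) i) =
      (∏ a, A fun k => (J k).orderEmbOfFin (hJ k) (τ k a)) *
        ∏ b, A fun k => (J k)ᶜ.orderEmbOfFin (card_compl_eq_sub (hJ k)) (ρ k b) := by
  rw [← (I.finSumComplEquiv hI).prod_comp, Fintype.prod_sum_type]
  simp only [blockPerm_apply_finSumComplEquiv, Sum.map_inl, Sum.map_inr]
  rfl

end Fiber

section hyperdetSummand

variable {m n r : ℕ}

def hyperdetSummand {R : Type*} [CommRing R] (m n : ℕ) (A : (Fin m → Fin n) → R)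
    (σ : Fin m → Perm (Fin n)) : R :=
  if ∀ k : Fin m, k.1 = 0 → σ k = 1 then
    (∏ k, ((Perm.sign (σ k) : ℤ) : R)) * ∏ i, A fun k => σ k i
  else 0

theorem hyperdet_eq_sum_hyperdetSummand {K : Type*} [Field K] (A : (Fin m → Fin n) → K) :
    hyperdet m n A = ∑ σ, hyperdetSummand m n A σ := rfl

theorem hyperdetSummand_eq_zero {R : Type*} [CommRing R] (hm0 : 0 < m)
    (A : (Fin m → Fin n) → R) {σ : Fin m → Perm (Fin n)} (hσ : σ ⟨0, hm0⟩ ≠ 1) :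
    hyperdetSummand m n A σ = 0 :=
  if_neg fun h => hσ (h _ rfl)

theorem hyperdetSummand_blockPerm {R : Type*} [CommRing R] (hm : Even m)
    (A : (Fin m → Fin n) → R) {I : Finset (Fin n)} (hI : I.card = r)
    {J : Fin m → Finset (Fin n)} (hJ : ∀ k, (J k).card = r)
    (hJI : ∀ k : Fin m, k.1 = 0 → J k = I) (τ : Fin m → Perm (Fin r))
    (ρ : Fin m → Perm (Fin (n - r))) :
    hyperdetSummand m n A (fun k => blockPerm hI (hJ k) (τ k) (ρ k)) =
      hyperdetSummand m r (fun a => A fun k => (J k).orderEmbOfFin (hJ k) (a k)) τ *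
        ((-1) ^ (∑ k, ∑ i ∈ J k, (i.1 + 1)) *
          hyperdetSummand m (n - r)
            (fun a => A fun k => (J k)ᶜ.orderEmbOfFin (card_compl_eq_sub (hJ k)) (a k)) ρ) := by
  have hcond : (∀ k : Fin m, k.1 = 0 → blockPerm hI (hJ k) (τ k) (ρ k) = 1) ↔
      (∀ k : Fin m, k.1 = 0 → τ k = 1) ∧ ∀ k : Fin m, k.1 = 0 → ρ k = 1 := by
    rw [← forall₂_and]
    exact forall₂_congr fun k hk => blockPerm_eq_one_iff hI (hJ k) (hJI k hk).symm
  unfold hyperdetSummand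
  rw [if_congr hcond rfl rfl, prod_sign_blockPerm (by simpa using hm), prod_blockPerm_apply]
  by_cases hτ : ∀ k : Fin m, k.1 = 0 → τ k = 1
  · by_cases hρ : ∀ k : Fin m, k.1 = 0 → ρ k = 1
    · rw [if_pos ⟨hτ, hρ⟩, if_pos hτ, if_pos hρ]
      ring
    · rw [if_neg fun h => hρ h.2, if_neg hρ]
      ring
  · rw [if_neg fun h => hτ h.1, if_neg hτ]
    ring

theorem sum_hyperdetSummand_fiber {K : Type*} [Field K] (hm : Even m)
    (A : (Fin m → Fin n) → K) {I : Finset (Fin n)} (hI : I.card = r)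
    {J : Fin m → Finset (Fin n)} (hJ : ∀ k, (J k).card = r)
    (hJI : ∀ k : Fin m, k.1 = 0 → J k = I) :
    ∑ σ with (fun k => I.image (σ k)) = J, hyperdetSummand m n A σ =
      hyperdet m r (fun a => A fun k => (J k).orderEmbOfFin (hJ k) (a k)) *
        ((-1) ^ (∑ k, ∑ i ∈ J k, (i.1 + 1)) *
          hyperdet m (n - r)
            (fun a => A fun k => (J k)ᶜ.orderEmbOfFin (card_compl_eq_sub (hJ k)) (a k))) := by
  rw [sum_filter_image_eq_sum_blockPerm hI hJ, Fintype.sum_prod_type]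
  simp only [hyperdetSummand_blockPerm hm A hI hJ hJI]
  rw [hyperdet_eq_sum_hyperdetSummand, hyperdet_eq_sum_hyperdetSummand, mul_sum, sum_mul_sum]

end hyperdetSummand

/-- Laplace expansion of the hyperdeterminant along the rows indexed by `I`. -/
theorem hyperdet_laplace (m n r : ℕ) (hm : Even m) (hm0 : 0 < m)
    (A : (Fin m → Fin n) → F) (I : Finset (Fin n)) (hI : I.card = r) :
    hyperdet m n A
    = ∑ J : Fin m → Finset (Fin n),
        if h : (∀ k, (J k).card = r) ∧ J ⟨0, hm0⟩ = I then
          hyperdet m r (fun a => A fun k => (J k).orderEmbOfFin (h.1 k) (a k)) *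
            ((-1 : F) ^ (∑ k, ∑ i ∈ J k, (i.1 + 1)) *
              hyperdet m (n - r) (fun a => A fun k =>
                ((J k)ᶜ).orderEmbOfFin
                  (by rw [Finset.card_compl, h.1 k, Fintype.card_fin]) (a k)))
        else 0 := by
  rw [hyperdet_eq_sum_hyperdetSummand, ← sum_fiberwise univ fun σ k => I.image (σ k)]
  refine sum_congr rfl fun J _ => ?_
  split_ifs with hJ
  · exact sum_hyperdetSummand_fiber hm A hI hJ.1 fun k hk => (congrArg J (Fin.ext hk)).trans hJ.2
  · refine sum_eq_zero fun σ hσ => hyperdetSummand_eq_zero hm0 A fun hσ0 => hJ ?_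
    obtain rfl := (mem_filter.1 hσ).2
    exact ⟨fun k => by rw [card_image_of_injective _ (σ k).injective, hI], by simp [hσ0]⟩
end
end

section
/- (Reduction of Pf^[l,m] to Barvinok's hyperpfaffian) Given an m-dimensional l-block array B of size ln, define the 1-dimensional lm-block array B̃ of size lmn by B̃(J) = B(I^(1),…,I^(m)) if J = (j(1),…,j(lm)) satisfies j(l(s−1)+k) = ln(s−1) + i^(s)(k) for all 1 ≤ s ≤ m, 1 ≤ k ≤ l (for some l-subsets I^(s) = (i^(s)(1),…,i^(s)(l)) of [ln]), and B̃(J) = 0 otherwise. Then Pf^[l,m](B) = Pf^[lm,1](B̃). -/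
open scoped Classical
open Finset Equiv

noncomputable section

variable {F : Type*} [Field F] [CharZero F]

/-- The shift embedding of the `s`-th copy of `[l*n]` into `[l*m*n]`. -/
def shiftEmb (l m n : ℕ) (s : Fin m) (j : Fin (l * n)) : Fin (l * m * n) :=
  ⟨l * n * s.1 + j.1, by
    have hj := j.2; have hs := s.2
    calc l * n * s.1 + j.1 < l * n * (s.1 + 1) := by rw [Nat.mul_add, Nat.mul_one]; omega
      _ ≤ l * n * m := Nat.mul_le_mul_left _ hs
      _ = l * m * n := by ring⟩

/-!
A tuple `σ` of block-increasing permutations of `[l*n]` gives the permutation `interleavePerm σ`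
of `[l*m*n]` sending the `i`-th entry of the `s`-th sub-block of the `k`-th block (of length `l*m`)
to `shiftEmb s (σ s (blk l n k i))`. It is block-increasing, its `k`-th block is the union of the
shifted `k`-th blocks of the `σ s`, and its sign is `∏ s, sign (σ s)`: it is `σ` acting on the `m`
shifted copies of `[l*n]`, composed with a fixed reshuffling of whole groups of `l` consecutive
entries, which is even because `l` is. Conversely every block-increasing permutation of `[l*m*n]`
whose blocks all have this product shape is some `interleavePerm σ`, and the others contribute
nothing since `B̃` vanishes on non-product blocks.
-/

lemma mul_add_lt_mul_add_iff_lex {q a a' b b' : ℕ} (hb : b < q) (hb' : b' < q) :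
    a * q + b < a' * q + b' ↔ a < a' ∨ a = a' ∧ b < b' := by
  constructor
  · intro h
    rcases lt_trichotomy a a' with ha | rfl | ha
    · exact Or.inl ha
    · exact Or.inr ⟨rfl, by omega⟩
    · nlinarith
  · rintro (ha | ⟨rfl, hb⟩)
    · nlinarith
    · omega

section Blocks

variable {L N : ℕ}

def blkEquiv (L N : ℕ) : Fin N × Fin L ≃ Fin (L * N) :=
  finProdFinEquiv.trans (finCongr (Nat.mul_comm N L))

@[simp] lemma blkEquiv_apply (p : Fin N × Fin L) : blkEquiv L N p = blk L N p.1 p.2 :=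
  Fin.ext <| by simp [blkEquiv, blk]; ring

lemma blk_inj {j j' : Fin N} {i i' : Fin L} :
    blk L N j i = blk L N j' i' ↔ j = j' ∧ i = i' := by
  simpa using (blkEquiv L N).injective.eq_iff (a := (j, i)) (b := (j', i'))

lemma exists_blk_eq (x : Fin (L * N)) : ∃ j i, blk L N j i = x := by
  obtain ⟨⟨j, i⟩, rfl⟩ := (blkEquiv L N).surjective x
  exact ⟨j, i, (blkEquiv_apply (j, i)).symm⟩

lemma blk_lt_blk_iff {j j' : Fin N} {i i' : Fin L} :
    blk L N j i < blk L N j' i' ↔ j < j' ∨ j = j' ∧ i < i' := by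
  simp only [Fin.lt_def, ← Fin.val_inj]
  exact mul_add_lt_mul_add_iff_lex i.2 i'.2

lemma card_blkSet (σ : Perm (Fin (L * N))) (j : Fin N) : #(blkSet L N σ j) = L := by
  rw [blkSet, card_image_of_injective _ fun i i' h => (blk_inj.1 (σ.injective h)).2,
    card_univ, Fintype.card_fin]

lemma disjoint_blkSet (σ : Perm (Fin (L * N))) {j j' : Fin N} (h : j ≠ j') :
    Disjoint (blkSet L N σ j) (blkSet L N σ j') := by
  simp only [blkSet, disjoint_left, mem_image, mem_univ, true_and]
  rintro _ ⟨i, rfl⟩ ⟨i', hi'⟩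
  exact h (blk_inj.1 (σ.injective hi')).1.symm

lemma BlockInc.eq_of_blkSet_eq {α β : Perm (Fin (L * N))} (hα : BlockInc L N α)
    (hβ : BlockInc L N β) (h : ∀ j, blkSet L N α j = blkSet L N β j) : α = β := by
  ext1 x
  obtain ⟨j, i, rfl⟩ := exists_blk_eq x
  have hrange : Set.range (fun i => α (blk L N j i)) = Set.range (fun i => β (blk L N j i)) := by
    simpa [blkSet, Set.image_univ] using coe_inj.2 (h j)
  exact congrFun (((hα j).range_inj (hβ j)).1 hrange) i

lemma exists_blockInc_blkSet_eq (P : Fin N → Finset (Fin (L * N))) (hcard : ∀ j, #(P j) = L)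
    (hdisj : Pairwise fun j j' => Disjoint (P j) (P j')) :
    ∃ σ : Perm (Fin (L * N)), BlockInc L N σ ∧ ∀ j, blkSet L N σ j = P j := by
  let g : Fin N × Fin L → Fin (L * N) := fun p => (P p.1).orderEmbOfFin (hcard p.1) p.2
  have hg : Function.Injective g := by
    rintro ⟨j, i⟩ ⟨j', i'⟩ h
    have hj : g (j, i) ∈ P j := orderEmbOfFin_mem _ _ _
    have hj' : g (j', i') ∈ P j' := orderEmbOfFin_mem _ _ _
    obtain rfl : j = j' := by
      by_contra hne
      exact disjoint_left.1 (hdisj hne) hj (h ▸ hj')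
    simpa [g] using h
  let σ : Perm (Fin (L * N)) := (blkEquiv L N).symm.trans (Equiv.ofBijective g
    ((Fintype.bijective_iff_injective_and_card g).2 ⟨hg, by simp [Nat.mul_comm]⟩))
  have hσ : ∀ j i, σ (blk L N j i) = g (j, i) := fun j i => by
    have : (blkEquiv L N).symm (blk L N j i) = (j, i) := by
      rw [Equiv.symm_apply_eq, blkEquiv_apply]
    simp [σ, this]
  refine ⟨σ, fun j => ?_, fun j => ?_⟩
  · simpa [hσ, g] using ((P j).orderEmbOfFin (hcard j)).strictMono
  · simp only [blkSet, hσ, g]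
    exact image_orderEmbOfFin_univ _ (hcard j)

end Blocks

section Interleave

variable {l m n : ℕ}

def shiftEquiv (l m n : ℕ) : Fin m × Fin (l * n) ≃ Fin (l * m * n) :=
  finProdFinEquiv.trans (finCongr (by ring))

@[simp] lemma shiftEquiv_apply (p : Fin m × Fin (l * n)) :
    shiftEquiv l m n p = shiftEmb l m n p.1 p.2 :=
  Fin.ext <| by simp [shiftEquiv, shiftEmb]; ring

lemma shiftEmb_inj {s s' : Fin m} {x x' : Fin (l * n)} :
    shiftEmb l m n s x = shiftEmb l m n s' x' ↔ s = s' ∧ x = x' := by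
  simpa using (shiftEquiv l m n).injective.eq_iff (a := (s, x)) (b := (s', x'))

lemma shiftEmb_lt_shiftEmb_iff {s s' : Fin m} {x x' : Fin (l * n)} :
    shiftEmb l m n s x < shiftEmb l m n s' x' ↔ s < s' ∨ s = s' ∧ x < x' := by
  simp only [shiftEmb, Fin.lt_def, ← Fin.val_inj, Nat.mul_comm (l * n)]
  exact mul_add_lt_mul_add_iff_lex x.2 x'.2

def blockTranspose (l m n : ℕ) : Perm (Fin (l * m * n)) :=
  ((blkEquiv l (m * n)).trans (finCongr (Nat.mul_assoc l m n).symm)).permCongr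
    (prodCongrLeft fun _ => (blkEquiv m n).symm.trans
      ((prodComm _ _).trans ((blkEquiv n m).trans (finCongr (Nat.mul_comm n m)))))

lemma blockTranspose_blk (k : Fin n) (s : Fin m) (i : Fin l) :
    blockTranspose l m n (blk (l * m) n k (blk l m s i)) = shiftEmb l m n s (blk l n k i) := by
  have hsplit : ((blkEquiv l (m * n)).trans (finCongr (Nat.mul_assoc l m n).symm)).symm
      (blk (l * m) n k (blk l m s i)) = (blkEquiv m n (k, s), i) := by
    rw [Equiv.symm_apply_eq]
    exact Fin.ext <| by simp [blk]; ring
  rw [blockTranspose, Equiv.permCongr_apply, hsplit, prodCongrLeft_apply,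
    Equiv.trans_apply, Equiv.trans_apply, Equiv.symm_apply_apply]
  exact Fin.ext <| by simp [blk, shiftEmb]; ring

lemma sign_blockTranspose (hl : Even l) : Perm.sign (blockTranspose l m n) = 1 := by
  obtain ⟨c, rfl⟩ := hl
  rw [blockTranspose, Perm.sign_permCongr, Perm.sign_prodCongrLeft, prod_const, card_univ,
    Fintype.card_fin, ← two_mul, pow_mul, Int.units_sq, one_pow]

def stackPerm (σ : Fin m → Perm (Fin (l * n))) : Perm (Fin (l * m * n)) :=
  (shiftEquiv l m n).permCongr (prodCongrRight σ)

lemma stackPerm_shiftEmb (σ : Fin m → Perm (Fin (l * n))) (s : Fin m) (x : Fin (l * n)) :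
    stackPerm σ (shiftEmb l m n s x) = shiftEmb l m n s (σ s x) := by
  rw [stackPerm, ← shiftEquiv_apply (s, x), Equiv.permCongr_apply, Equiv.symm_apply_apply,
    prodCongrRight_apply, shiftEquiv_apply]

lemma stackPerm_injective : Function.Injective (stackPerm (l := l) (m := m) (n := n)) := by
  intro σ σ' h
  funext s
  ext1 x
  simpa [stackPerm_shiftEmb, shiftEmb_inj] using congrArg (· (shiftEmb l m n s x)) h

def interleavePerm (σ : Fin m → Perm (Fin (l * n))) : Perm (Fin (l * m * n)) :=
  stackPerm σ * blockTranspose l m n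

lemma interleavePerm_blk (σ : Fin m → Perm (Fin (l * n))) (k : Fin n) (s : Fin m) (i : Fin l) :
    interleavePerm σ (blk (l * m) n k (blk l m s i)) =
      shiftEmb l m n s (σ s (blk l n k i)) := by
  rw [interleavePerm, Perm.mul_apply, blockTranspose_blk, stackPerm_shiftEmb]

lemma sign_interleavePerm (hl : Even l) (σ : Fin m → Perm (Fin (l * n))) :
    Perm.sign (interleavePerm σ) = ∏ s, Perm.sign (σ s) := by
  rw [interleavePerm, map_mul, sign_blockTranspose hl, mul_one, stackPerm, Perm.sign_permCongr,
    Perm.sign_prodCongrRight]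

lemma interleavePerm_injective : Function.Injective (interleavePerm (l := l) (m := m) (n := n)) :=
  fun _ _ h => stackPerm_injective (mul_right_cancel h)

lemma blockInc_interleavePerm {σ : Fin m → Perm (Fin (l * n))}
    (hσ : ∀ s, BlockInc l n (σ s)) : BlockInc (l * m) n (interleavePerm σ) := by
  intro k t t' htt'
  obtain ⟨s, i, rfl⟩ := exists_blk_eq t
  obtain ⟨s', i', rfl⟩ := exists_blk_eq t'
  simp only [interleavePerm_blk, shiftEmb_lt_shiftEmb_iff]
  rcases blk_lt_blk_iff.1 htt' with hs | ⟨rfl, hi⟩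
  · exact Or.inl hs
  · exact Or.inr ⟨rfl, hσ s k hi⟩

def shiftBiUnion (l m n : ℕ) (I : Fin m → Finset (Fin (l * n))) : Finset (Fin (l * m * n)) :=
  univ.biUnion fun s => (I s).image (shiftEmb l m n s)

lemma blkSet_interleavePerm (σ : Fin m → Perm (Fin (l * n))) (k : Fin n) :
    blkSet (l * m) n (interleavePerm σ) k = shiftBiUnion l m n fun s => blkSet l n (σ s) k := by
  ext x
  simp only [shiftBiUnion, blkSet, mem_biUnion, mem_image, mem_univ, true_and]
  constructor
  · rintro ⟨t, rfl⟩
    obtain ⟨s, i, rfl⟩ := exists_blk_eq t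
    exact ⟨s, _, ⟨i, rfl⟩, (interleavePerm_blk σ k s i).symm⟩
  · rintro ⟨s, _, ⟨i, rfl⟩, rfl⟩
    exact ⟨blk l m s i, interleavePerm_blk σ k s i⟩

lemma exists_interleavePerm_eq {τ : Perm (Fin (l * m * n))}
    (hτ : BlockInc (l * m) n τ)
    (hprod : ∀ k, ∃ I : Fin m → Finset (Fin (l * n)), (∀ s, #(I s) = l) ∧
      blkSet (l * m) n τ k = shiftBiUnion l m n I) :
    ∃ σ : Fin m → Perm (Fin (l * n)),
      (∀ s, BlockInc l n (σ s)) ∧ interleavePerm σ = τ := by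
  choose I hcard hI using hprod
  have hdisj (s : Fin m) : Pairwise fun k k' => Disjoint (I k s) (I k' s) := by
    intro k k' hkk'
    rw [← disjoint_image (f := shiftEmb l m n s) fun x x' h => (shiftEmb_inj.1 h).2]
    refine (disjoint_blkSet τ hkk').mono ?_ ?_ <;> rw [hI] <;>
      exact subset_biUnion_of_mem (fun s => (I _ s).image (shiftEmb l m n s)) (mem_univ s)
  choose σ hσ hσI using fun s =>
    exists_blockInc_blkSet_eq (fun k => I k s) (fun k => hcard k s) (hdisj s)
  refine ⟨σ, hσ, BlockInc.eq_of_blkSet_eq (blockInc_interleavePerm hσ) hτ fun k => ?_⟩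
  simp only [blkSet_interleavePerm, hI, hσI]

end Interleave

lemma hyperpf_eq_sum_filter {K ι : Type*} [Field K] [Fintype ι] (L n : ℕ)
    (B : (ι → Finset (Fin (L * n))) → K) :
    hyperpf L n B = (n.factorial : K)⁻¹ *
      ∑ σ ∈ univ.filter fun σ : ι → Perm (Fin (L * n)) => ∀ s, BlockInc L n (σ s),
        (∏ s, ((Perm.sign (σ s) : ℤ) : K)) * ∏ k, B fun s => blkSet L n (σ s) k := by
  rw [hyperpf, sum_filter]

lemma hyperpf_of_unique {K ι : Type*} [Field K] [Fintype ι] [Unique ι] (L n : ℕ)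
    (B : (ι → Finset (Fin (L * n))) → K) :
    hyperpf L n B = (n.factorial : K)⁻¹ * ∑ τ ∈ univ.filter (BlockInc L n),
      ((Perm.sign τ : ℤ) : K) * ∏ k, B fun _ => blkSet L n τ k := by
  rw [hyperpf_eq_sum_filter]
  congr 1
  exact sum_equiv (funUnique ι _) (by simp [Unique.forall_iff]) (by simp [Unique.eq_default])

theorem hyperpf_eq_barvinok_general (l m n : ℕ) (hl : Even l) (B : (Fin m → Finset (Fin (l * n))) → F)
    (Bt : (Fin 1 → Finset (Fin (l * m * n))) → F)
    (h1 : ∀ I : Fin m → Finset (Fin (l * n)), (∀ s, (I s).card = l) →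
      Bt (fun _ => Finset.univ.biUnion fun s : Fin m => (I s).image (shiftEmb l m n s))
        = B I)
    (h2 : ∀ J : Finset (Fin (l * m * n)), J.card = l * m →
      (¬ ∃ I : Fin m → Finset (Fin (l * n)), (∀ s, (I s).card = l) ∧
        J = Finset.univ.biUnion fun s : Fin m => (I s).image (shiftEmb l m n s)) →
      Bt (fun _ => J) = 0) :
    hyperpf l n B = hyperpf (l * m) n Bt := by
  have hterm (σ : Fin m → Perm (Fin (l * n))) : (∏ s, ((Perm.sign (σ s) : ℤ) : F)) *
      ∏ k, B (fun s => blkSet l n (σ s) k) = ((Perm.sign (interleavePerm σ) : ℤ) : F) *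
        ∏ k, Bt fun _ => blkSet (l * m) n (interleavePerm σ) k := by
    simp only [sign_interleavePerm hl, blkSet_interleavePerm, shiftBiUnion,
      h1 _ fun s => card_blkSet _ _]
    push_cast
    rfl
  rw [hyperpf_eq_sum_filter, hyperpf_of_unique]
  congr 1
  refine sum_of_injOn interleavePerm interleavePerm_injective.injOn (fun σ hσ => ?_)
    (fun τ hτ hτσ => ?_) fun σ _ => hterm σ
  · simp only [coe_filter, mem_univ, true_and, Set.mem_ofPred_eq] at hσ ⊢
    exact blockInc_interleavePerm hσ
  · obtain ⟨k, hk⟩ : ∃ k, ¬ ∃ I : Fin m → Finset (Fin (l * n)), (∀ s, #(I s) = l) ∧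
        blkSet (l * m) n τ k = shiftBiUnion l m n I := by
      by_contra! hprod
      obtain ⟨σ, hσ, rfl⟩ := exists_interleavePerm_eq (mem_filter.1 hτ).2 hprod
      exact hτσ ⟨σ, by simpa using hσ, rfl⟩
    exact mul_eq_zero_of_right _ (prod_eq_zero (mem_univ k) (h2 _ (card_blkSet τ k) hk))

/-- Reduction of `Pf^[l,m]` to Barvinok's hyperpfaffian `Pf^[lm,1]`. -/
theorem hyperpf_eq_barvinok (l m n : ℕ) (hl : Even l) (hl0 : 0 < l) (hm : 0 < m)
    (hn : 0 < n) (B : (Fin m → Finset (Fin (l * n))) → F)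
    (Bt : (Fin 1 → Finset (Fin (l * m * n))) → F)
    (h1 : ∀ I : Fin m → Finset (Fin (l * n)), (∀ s, (I s).card = l) →
      Bt (fun _ => Finset.univ.biUnion fun s : Fin m => (I s).image (shiftEmb l m n s))
        = B I)
    (h2 : ∀ J : Finset (Fin (l * m * n)), J.card = l * m →
      (¬ ∃ I : Fin m → Finset (Fin (l * n)), (∀ s, (I s).card = l) ∧
        J = Finset.univ.biUnion fun s : Fin m => (I s).image (shiftEmb l m n s)) →
      Bt (fun _ => J) = 0) :
    hyperpf l n B = hyperpf (l * m) n Bt :=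
  hyperpf_eq_barvinok_general l m n hl B Bt h1 h2
end
end
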